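/- arXiv:1310.0503 — 5 statements merged into one kernel-verified Lean document; each statement's English description precedes it below -/
import Mathlib

section
/- Given a cocycle (f,g) ∈ Z²(L,A), the set B = A × L with addition (a,x) + (b,y) = (a + b + g(x,y), x + y) and bracket [(a,x),(b,y)] = (f(x,y), [x,y]) is a Lie ring, whose addition is associative and commutative, with zero element (0,0), and whose bracket is bilinear, alternating, and satisfies the Jacobi identity. -/
/-- The five cocycle conditions of Horn–Zandi for a pair `(f, g)` of maps `L × L → A`,
where `L` is a Lie ring and `A` a trivial `L`-module (an abelian group). -/
def IsLieRingCocycle {L A : Type*} [LieRing L] [AddCommGroup A]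
    (f g : L → L → A) : Prop :=
  (∀ x y z : L, f (x + y) z = f x z + f y z + g ⁅x, z⁆ ⁅y, z⁆) ∧
  (∀ x y z : L, f x (y + z) = f x y + f x z + g ⁅x, y⁆ ⁅x, z⁆) ∧
  (∀ x : L, f x x = 0) ∧
  (∀ x y z : L, f x ⁅y, z⁆ + f z ⁅x, y⁆ + f y ⁅z, x⁆ =
    - g ⁅x, ⁅y, z⁆⁆ ⁅z, ⁅x, y⁆⁆ - g (-⁅y, ⁅z, x⁆⁆) ⁅y, ⁅z, x⁆⁆) ∧
  (∀ x y z : L, g (x + y) z + g x y = g x (y + z) + g y z) ∧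
  (∀ x y : L, g x y = g y x)

/-- Coboundaries: pairs arising from a map `t : L → A` with `t 0 = 0` via
`f (x, y) = -t ⁅x, y⁆` and `g (x, y) = t x + t y - t (x + y)`. -/
def IsLieRingCoboundary {L A : Type*} [LieRing L] [AddCommGroup A]
    (f g : L → L → A) : Prop :=
  ∃ t : L → A, t 0 = 0 ∧ (∀ x y : L, f x y = - t ⁅x, y⁆) ∧
    (∀ x y : L, g x y = t x + t y - t (x + y))

/-- Given a cocycle `(f, g) ∈ Z²(L, A)` (normalized so that
`g 0 0 = 0`), the set `B = A × L` with addition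
`(a, x) + (b, y) = (a + b + g x y, x + y)` and bracket
`⁅(a, x), (b, y)⁆ = (f x y, ⁅x, y⁆)` is a Lie ring: addition is associative and
commutative with zero element `(0, 0)` and inverses, and the bracket is
bilinear, alternating, and satisfies the Jacobi identity. -/
theorem cocycle_extension_isLieRing {L A : Type*} [LieRing L] [AddCommGroup A]
    (f g : L → L → A) (hfg : IsLieRingCocycle f g) (hg0 : g 0 0 = 0)
    (add br : A × L → A × L → A × L)
    (hadd : ∀ p q : A × L, add p q = (p.1 + q.1 + g p.2 q.2, p.2 + q.2))
    (hbr : ∀ p q : A × L, br p q = (f p.2 q.2, ⁅p.2, q.2⁆)) :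
    (∀ p q r : A × L, add (add p q) r = add p (add q r)) ∧
    (∀ p q : A × L, add p q = add q p) ∧
    (∀ p : A × L, add p (0, 0) = p) ∧
    (∀ p : A × L, ∃ q : A × L, add p q = (0, 0)) ∧
    (∀ p q r : A × L, br (add p q) r = add (br p r) (br q r)) ∧
    (∀ p q r : A × L, br p (add q r) = add (br p q) (br p r)) ∧
    (∀ p : A × L, br p p = (0, 0)) ∧
    (∀ p q r : A × L,
      add (add (br p (br q r)) (br r (br p q))) (br q (br r p)) = (0, 0)) := by
  obtain ⟨h1, h2, h3, h4, h5, h6⟩ := hfg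
  have hgx0 : ∀ x : L, g x 0 = 0 := by
    intro x
    have h := h5 x 0 0
    simp only [add_zero, hg0] at h
    exact add_right_cancel (h.trans (zero_add _).symm)
  refine ⟨?_, ?_, ?_, ?_, ?_, ?_, ?_, ?_⟩
  · intro p q r
    simp only [hadd]
    refine Prod.ext ?_ (add_assoc _ _ _)
    have h := h5 p.2 q.2 r.2
    show p.1 + q.1 + g p.2 q.2 + r.1 + g (p.2 + q.2) r.2
        = p.1 + (q.1 + r.1 + g q.2 r.2) + g p.2 (q.2 + r.2)
    calc p.1 + q.1 + g p.2 q.2 + r.1 + g (p.2 + q.2) r.2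
        = p.1 + q.1 + r.1 + (g (p.2 + q.2) r.2 + g p.2 q.2) := by abel
      _ = p.1 + q.1 + r.1 + (g p.2 (q.2 + r.2) + g q.2 r.2) := by rw [h]
      _ = p.1 + (q.1 + r.1 + g q.2 r.2) + g p.2 (q.2 + r.2) := by abel
  · intro p q
    simp only [hadd, h6 p.2 q.2, add_comm p.2 q.2]
    refine Prod.ext ?_ rfl
    abel
  · intro p
    simp [hadd, hgx0]
  · intro p
    refine ⟨(-p.1 - g p.2 (-p.2), -p.2), ?_⟩
    simp [hadd]
    abel
  · intro p q r
    simp only [hadd, hbr, add_lie]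
    exact Prod.ext (h1 p.2 q.2 r.2) rfl
  · intro p q r
    simp only [hadd, hbr, lie_add]
    exact Prod.ext (h2 p.2 q.2 r.2) rfl
  · intro p
    simp [hbr, h3 p.2]
  · intro p q r
    simp only [hadd, hbr]
    have hJ : ⁅p.2, ⁅q.2, r.2⁆⁆ + ⁅r.2, ⁅p.2, q.2⁆⁆ = -⁅q.2, ⁅r.2, p.2⁆⁆ := by
      have h := lie_jacobi p.2 q.2 r.2
      have h' : ⁅p.2, ⁅q.2, r.2⁆⁆ + ⁅r.2, ⁅p.2, q.2⁆⁆ + ⁅q.2, ⁅r.2, p.2⁆⁆ = 0 := by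
        rw [← h]; abel
      exact add_eq_zero_iff_eq_neg.mp h'
    refine Prod.ext ?_ ?_
    · show f p.2 ⁅q.2, r.2⁆ + f r.2 ⁅p.2, q.2⁆ + g ⁅p.2, ⁅q.2, r.2⁆⁆ ⁅r.2, ⁅p.2, q.2⁆⁆
        + f q.2 ⁅r.2, p.2⁆ + g (⁅p.2, ⁅q.2, r.2⁆⁆ + ⁅r.2, ⁅p.2, q.2⁆⁆) ⁅q.2, ⁅r.2, p.2⁆⁆ = 0
      rw [hJ]
      have h := h4 p.2 q.2 r.2
      calc f p.2 ⁅q.2, r.2⁆ + f r.2 ⁅p.2, q.2⁆ + g ⁅p.2, ⁅q.2, r.2⁆⁆ ⁅r.2, ⁅p.2, q.2⁆⁆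
          + f q.2 ⁅r.2, p.2⁆ + g (-⁅q.2, ⁅r.2, p.2⁆⁆) ⁅q.2, ⁅r.2, p.2⁆⁆
          = (f p.2 ⁅q.2, r.2⁆ + f r.2 ⁅p.2, q.2⁆ + f q.2 ⁅r.2, p.2⁆)
            + g ⁅p.2, ⁅q.2, r.2⁆⁆ ⁅r.2, ⁅p.2, q.2⁆⁆
            + g (-⁅q.2, ⁅r.2, p.2⁆⁆) ⁅q.2, ⁅r.2, p.2⁆⁆ := by abel
        _ = 0 := by rw [h]; abel
    · show ⁅p.2, ⁅q.2, r.2⁆⁆ + ⁅r.2, ⁅p.2, q.2⁆⁆ + ⁅q.2, ⁅r.2, p.2⁆⁆ = 0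
      rw [hJ]; abel
end

section
/- Let F be a free Lie ring and R an ideal of F, and let 0 → A → B → C → 0 be a central extension of Lie rings. Then any Lie ring homomorphism α : F/R → C lifts to a homomorphism β : F/[F,R] → B making the diagram commute, i.e., φ ∘ β = α ∘ π where π : F/[F,R] → F/R is the natural projection and φ : B → C the given surjection. -/
/-!
Lift the generators of the free Lie ring `F` arbitrarily through `φ`; by freeness this gives
`g : F → B` with `φ ∘ g = α ∘ π`. Then `g` maps `R` into `ker φ`, which is central, so
`g ⁅x, r⁆ = ⁅g x, g r⁆ = 0` for `r ∈ R`: `g` kills `⁅F, R⁆` and factors through `F / ⁅F, R⁆`.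
-/

namespace LieIdeal

variable {R L L' : Type*} [CommRing R] [LieRing L] [LieAlgebra R L] [LieRing L'] [LieAlgebra R L']

def mkQ (I : LieIdeal R L) : L →ₗ⁅R⁆ L ⧸ I :=
  { (LieSubmodule.Quotient.mk' I).toLinearMap with map_lie' := rfl }

def liftQ (I : LieIdeal R L) (f : L →ₗ⁅R⁆ L') (h : I ≤ f.ker) : L ⧸ I →ₗ⁅R⁆ L' :=
  { I.toSubmodule.liftQ f.toLinearMap h with
    map_lie' := by
      rintro ⟨x⟩ ⟨y⟩
      exact f.map_lie x y }

end LieIdeal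

lemma FreeLieAlgebra.exists_comp_eq_of_surjective {R X B C : Type*} [CommRing R]
    [LieRing B] [LieAlgebra R B] [LieRing C] [LieAlgebra R C]
    {φ : B →ₗ⁅R⁆ C} (hφ : Function.Surjective φ) (f : FreeLieAlgebra R X →ₗ⁅R⁆ C) :
    ∃ g : FreeLieAlgebra R X →ₗ⁅R⁆ B, φ.comp g = f :=
  ⟨lift R (Function.surjInv hφ ∘ f ∘ of R), hom_ext fun x => by
    simp only [LieHom.comp_apply, lift_of_apply, Function.comp_apply,
      Function.surjInv_eq hφ]⟩

lemma LieHom.top_lie_le_ker_of_le_ker_comp {R L B C : Type*} [CommRing R]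
    [LieRing L] [LieAlgebra R L] [LieRing B] [LieAlgebra R B] [LieRing C] [LieAlgebra R C]
    {φ : B →ₗ⁅R⁆ C} (hcent : ∀ a : B, φ a = 0 → ∀ b : B, ⁅a, b⁆ = 0)
    (g : L →ₗ⁅R⁆ B) {I : LieIdeal R L} (hI : I ≤ (φ.comp g).ker) :
    ⁅(⊤ : LieIdeal R L), I⁆ ≤ g.ker := by
  rw [LieSubmodule.lie_le_iff]
  intro x _ r hr
  rw [LieHom.mem_ker, LieHom.map_lie, ← lie_skew, hcent (g r) (hI hr) (g x), neg_zero]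

/-- Let `F` be a free Lie ring (the free Lie ring on a set `X`,
i.e. the free Lie algebra over `ℤ`), `R` an ideal of `F`, and
`0 → A → B → C → 0` a central extension of Lie rings (`φ : B → C` surjective
with central kernel). Then any Lie ring homomorphism `α : F/R → C` lifts to a
homomorphism `β : F/[F,R] → B` making the diagram commute:
`φ ∘ β = α ∘ π` for the natural projection `π : F/[F,R] → F/R`. -/
theorem lift_of_free_presentation {X B C : Type*} [LieRing B] [LieRing C]
    (R : LieIdeal ℤ (FreeLieAlgebra ℤ X))
    (φ : B →ₗ⁅ℤ⁆ C) (hsurj : Function.Surjective φ)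
    (hcent : ∀ a : B, φ a = 0 → ∀ b : B, ⁅a, b⁆ = 0)
    (α : (FreeLieAlgebra ℤ X ⧸ R) →ₗ⁅ℤ⁆ C) :
    ∃ β : (FreeLieAlgebra ℤ X ⧸
        (⁅(⊤ : LieIdeal ℤ (FreeLieAlgebra ℤ X)), R⁆ :
          LieIdeal ℤ (FreeLieAlgebra ℤ X))) →ₗ⁅ℤ⁆ B,
      ∀ x : FreeLieAlgebra ℤ X,
        φ (β (LieSubmodule.Quotient.mk x)) = α (LieSubmodule.Quotient.mk x) := by
  obtain ⟨g, hg⟩ := FreeLieAlgebra.exists_comp_eq_of_surjective hsurj (α.comp R.mkQ)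
  have hR : R ≤ (φ.comp g).ker := fun r hr => LieHom.mem_ker.2 <|
    calc φ (g r) = α (LieSubmodule.Quotient.mk r) := DFunLike.congr_fun hg r
      _ = 0 := by rw [(LieSubmodule.Quotient.mk_eq_zero' (N := R)).2 hr, map_zero]
  exact ⟨LieIdeal.liftQ _ g (LieHom.top_lie_le_ker_of_le_ker_comp hcent g hR),
    DFunLike.congr_fun hg⟩
end

section
/- Let H be a central ideal of a Lie ring L and A a trivial L-module. Then the five-term sequence 0 → Hom(L/H,A) → Hom(L,A) → Hom(H,A) → H²(L/H,A) → H²(L,A) is exact, where the first two maps are inflation (precomposition with the quotient map) and restriction, the third is transgression, and the last is inflation on second cohomology. -/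
private lemma aux_lie_eq {L : Type*} [LieRing L] (H : LieIdeal ℤ L)
    (hH : H ≤ LieAlgebra.center ℤ L) (x y a b : L)
    (hx : x - a ∈ H) (hy : y - b ∈ H) : ⁅x, y⁆ = ⁅a, b⁆ := by
  have h1 : ⁅x, y⁆ - ⁅a, b⁆ = ⁅x - a, y⁆ + ⁅a, y - b⁆ := by
    rw [sub_lie, lie_sub]; abel
  have h2 : ⁅x - a, y⁆ = 0 := by
    rw [← lie_skew, hH hx y, neg_zero]
  have h3 : ⁅a, y - b⁆ = 0 := hH hy a
  rw [h2, h3, add_zero] at h1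
  exact sub_eq_zero.mp h1

/-- Theorem 1 / Theorem 4.1, five-term exact sequence: for a
central ideal `H` of a Lie ring `L` and a trivial module `A`, the sequence
`0 → Hom(L/H, A) → Hom(L, A) → Hom(H, A) → H²(L/H, A) → H²(L, A)` is exact.
Here Lie ring homomorphisms into the abelian Lie ring `A` are additive maps
vanishing on brackets, and the four exactness assertions are stated
elementwise: injectivity of inflation on `Hom`, exactness at `Hom(L, A)`
(image of inflation = kernel of restriction), exactness at `Hom(H, A)`
(image of restriction = kernel of transgression, where `(F, G)` is the cocycle
of the extension `0 → H → L → L/H → 0` given by the section `μ`), and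
exactness at `H²(L/H, A)` (image of transgression = kernel of inflation on
second cohomology, stated on cocycle representatives). -/
theorem five_term_exact_sequence {L A : Type*} [LieRing L] [AddCommGroup A]
    (H : LieIdeal ℤ L) (hH : H ≤ LieAlgebra.center ℤ L)
    (mu : (L ⧸ H) → L)
    (hmu : ∀ q : L ⧸ H, (LieSubmodule.Quotient.mk (N := H) (mu q)) = q)
    (hmu0 : mu 0 = 0)
    (F G : (L ⧸ H) → (L ⧸ H) → H)
    (hF : ∀ s t : L ⧸ H, (F s t : L) = ⁅mu s, mu t⁆ - mu ⁅s, t⁆)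
    (hG : ∀ s t : L ⧸ H, (G s t : L) = mu s + mu t - mu (s + t)) :
    -- exactness at Hom(L/H, A): inflation is injective
    (∀ χ₁ χ₂ : (L ⧸ H) →+ A,
      (∀ s t : L ⧸ H, χ₁ ⁅s, t⁆ = 0) → (∀ s t : L ⧸ H, χ₂ ⁅s, t⁆ = 0) →
      (∀ x : L, χ₁ (LieSubmodule.Quotient.mk (N := H) x)
        = χ₂ (LieSubmodule.Quotient.mk (N := H) x)) → χ₁ = χ₂) ∧
    -- exactness at Hom(L, A): image of inflation = kernel of restriction
    (∀ h : L →+ A, (∀ x y : L, h ⁅x, y⁆ = 0) →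
      ((∃ χ : (L ⧸ H) →+ A, (∀ s t : L ⧸ H, χ ⁅s, t⁆ = 0) ∧
          ∀ x : L, h x = χ (LieSubmodule.Quotient.mk (N := H) x)) ↔
        ∀ k : H, h k = 0)) ∧
    -- exactness at Hom(H, A): image of restriction = kernel of transgression
    (∀ χ : H →+ A,
      (IsLieRingCoboundary (fun s t : L ⧸ H => χ (F s t))
          (fun s t : L ⧸ H => χ (G s t)) ↔
        ∃ h : L →+ A, (∀ x y : L, h ⁅x, y⁆ = 0) ∧ ∀ k : H, h k = χ k)) ∧
    -- exactness at H²(L/H, A): image of transgression = kernel of inflation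
    (∀ f g : (L ⧸ H) → (L ⧸ H) → A, IsLieRingCocycle f g →
      (IsLieRingCoboundary
          (fun x y : L => f (LieSubmodule.Quotient.mk (N := H) x)
            (LieSubmodule.Quotient.mk (N := H) y))
          (fun x y : L => g (LieSubmodule.Quotient.mk (N := H) x)
            (LieSubmodule.Quotient.mk (N := H) y)) ↔
        ∃ χ : H →+ A,
          IsLieRingCoboundary (fun s t : L ⧸ H => f s t - χ (F s t))
            (fun s t : L ⧸ H => g s t - χ (G s t)))) := by
  
  have hmk_add : ∀ x y : L, LieSubmodule.Quotient.mk (N := H) (x + y)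
      = LieSubmodule.Quotient.mk (N := H) x + LieSubmodule.Quotient.mk (N := H) y :=
    fun _ _ => rfl
  have hmk_lie : ∀ x y : L, LieSubmodule.Quotient.mk (N := H) ⁅x, y⁆
      = ⁅LieSubmodule.Quotient.mk (N := H) x, LieSubmodule.Quotient.mk (N := H) y⁆ :=
    fun _ _ => rfl
  have hmk0 : (LieSubmodule.Quotient.mk (N := H) (0 : L)) = 0 := rfl
  have hmkH : ∀ k : H, LieSubmodule.Quotient.mk (N := H) (k : L) = 0 :=
    fun k => (LieSubmodule.Quotient.mk_eq_zero H).mpr k.2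
  have hmem : ∀ x : L, x - mu (LieSubmodule.Quotient.mk (N := H) x) ∈ H := by
    intro x
    rw [← LieSubmodule.Quotient.mk_eq_zero H]
    show LieSubmodule.Quotient.mk (N := H) x
        - LieSubmodule.Quotient.mk (N := H) (mu (LieSubmodule.Quotient.mk (N := H) x)) = 0
    rw [hmu, sub_self]
  set δ : L → H := fun x => ⟨x - mu (LieSubmodule.Quotient.mk (N := H) x), hmem x⟩ with hδdef
  have δ_coe : ∀ x : L, (δ x : L) = x - mu (LieSubmodule.Quotient.mk (N := H) x) :=
    fun _ => rfl
  have δ_add : ∀ x y : L, δ (x + y) = δ x + δ y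
      + G (LieSubmodule.Quotient.mk (N := H) x) (LieSubmodule.Quotient.mk (N := H) y) := by
    intro x y
    apply Subtype.ext
    push_cast [δ_coe, hG, hmk_add]
    abel
  have δ_lie : ∀ x y : L, δ ⁅x, y⁆
      = F (LieSubmodule.Quotient.mk (N := H) x) (LieSubmodule.Quotient.mk (N := H) y) := by
    intro x y
    apply Subtype.ext
    rw [δ_coe, hF, hmk_lie]
    rw [aux_lie_eq H hH x y (mu (LieSubmodule.Quotient.mk (N := H) x))
      (mu (LieSubmodule.Quotient.mk (N := H) y)) (hmem x) (hmem y)]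
  have δ_H : ∀ k : H, δ (k : L) = k := by
    intro k
    apply Subtype.ext
    rw [δ_coe, hmkH, hmu0, sub_zero]
  refine ⟨?_, ?_, ?_, ?_⟩
  · -- injectivity of inflation
    intro χ₁ χ₂ _ _ hagree
    ext q
    rw [← hmu q]
    exact hagree (mu q)
  · -- exactness at Hom(L, A)
    intro h hbr
    constructor
    · rintro ⟨χ, hχ, hfac⟩ k
      rw [hfac k, hmkH k, map_zero]
    · intro hker
      have hadd : ∀ q q' : L ⧸ H, h (mu (q + q')) = h (mu q) + h (mu q') := by
        intro q q'
        have h1 : mu (q + q') = (mu q + mu q') - ((G q q' : H) : L) := by rw [hG]; abel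
        rw [h1, map_sub, map_add, hker, sub_zero]
      refine ⟨AddMonoidHom.mk' (fun q => h (mu q)) hadd, ?_, ?_⟩
      · intro s t
        show h (mu ⁅s, t⁆) = 0
        have h1 : mu ⁅s, t⁆ = ⁅mu s, mu t⁆ - ((F s t : H) : L) := by rw [hF]; abel
        rw [h1, map_sub, hbr, hker, sub_zero]
      · intro x
        show h x = h (mu (LieSubmodule.Quotient.mk (N := H) x))
        have h1 : h x - h (mu (LieSubmodule.Quotient.mk (N := H) x)) = 0 := by
          rw [← map_sub, ← δ_coe, hker]
        exact sub_eq_zero.mp h1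
  · -- exactness at Hom(H, A)
    intro χ
    constructor
    · rintro ⟨t, ht0, htf, htg⟩
      have htf' : ∀ s s' : L ⧸ H, χ (F s s') = - t ⁅s, s'⁆ := htf
      have htg' : ∀ s s' : L ⧸ H, χ (G s s') = t s + t s' - t (s + s') := htg
      have hadd : ∀ x y : L,
          (χ (δ (x + y)) + t (LieSubmodule.Quotient.mk (N := H) (x + y)))
          = (χ (δ x) + t (LieSubmodule.Quotient.mk (N := H) x))
            + (χ (δ y) + t (LieSubmodule.Quotient.mk (N := H) y)) := by
        intro x y
        rw [δ_add, map_add, map_add, hmk_add, htg']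
        abel
      refine ⟨AddMonoidHom.mk' (fun x => χ (δ x) + t (LieSubmodule.Quotient.mk (N := H) x))
        (fun x y => hadd x y), ?_, ?_⟩
      · intro x y
        show χ (δ ⁅x, y⁆) + t (LieSubmodule.Quotient.mk (N := H) ⁅x, y⁆) = 0
        rw [δ_lie, htf', hmk_lie, neg_add_cancel]
      · intro k
        show χ (δ (k : L)) + t (LieSubmodule.Quotient.mk (N := H) (k : L)) = χ k
        rw [δ_H, hmkH, ht0, add_zero]
    · rintro ⟨h, hbr, hres⟩
      refine ⟨fun q => h (mu q), by show h (mu 0) = 0; rw [hmu0, map_zero], ?_, ?_⟩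
      · intro s s'
        show χ (F s s') = - h (mu ⁅s, s'⁆)
        rw [← hres, hF, map_sub, hbr, zero_sub]
      · intro s s'
        show χ (G s s') = h (mu s) + h (mu s') - h (mu (s + s'))
        rw [← hres, hG, map_sub, map_add]
  · -- exactness at H²(L/H, A)
    intro f g _
    constructor
    · rintro ⟨t, ht0, htf, htg⟩
      have htf' : ∀ x y : L,
          f (LieSubmodule.Quotient.mk (N := H) x) (LieSubmodule.Quotient.mk (N := H) y)
          = - t ⁅x, y⁆ := htf
      have htg' : ∀ x y : L,
          g (LieSubmodule.Quotient.mk (N := H) x) (LieSubmodule.Quotient.mk (N := H) y)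
          = t x + t y - t (x + y) := htg
      have hg00 : ∀ s : L ⧸ H, g 0 s = 0 := by
        intro s
        have h1 := htg' 0 (mu s)
        simp only [hmk0, hmu, ht0, zero_add, sub_self] at h1
        exact h1
      have htH : ∀ (k : H) (x : L), t ((k : L) + x) = t (k : L) + t x := by
        intro k x
        have h1 := htg' (k : L) x
        rw [hmkH, hg00] at h1
        exact (sub_eq_zero.mp h1.symm).symm
      have tadd : ∀ k k' : H, t ((k + k' : H) : L) = t (k : L) + t (k' : L) := by
        intro k k'
        have hcoe : ((k + k' : H) : L) = (k : L) + (k' : L) := rfl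
        rw [hcoe, htH]
      refine ⟨AddMonoidHom.mk' (fun k : H => - t (k : L))
        (fun k k' => by simp only [tadd]; abel), fun q => t (mu q), by show t (mu 0) = 0; rw [hmu0, ht0], ?_, ?_⟩
      · intro s s'
        show f s s' - (AddMonoidHom.mk' (fun k : H => - t (k : L)) _) (F s s')
            = - t (mu ⁅s, s'⁆)
        have hχ : (AddMonoidHom.mk' (fun k : H => - t (k : L))
            (fun k k' => by simp only [tadd]; abel)) (F s s') = - t ((F s s' : H) : L) := rfl
        have hb : ⁅mu s, mu s'⁆ = ((F s s' : H) : L) + mu ⁅s, s'⁆ := by rw [hF]; abel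
        have h1 : f s s' = - t ⁅mu s, mu s'⁆ := by
          have h2 := htf' (mu s) (mu s')
          rwa [hmu, hmu] at h2
        rw [h1, hb, htH, hχ]
        abel
      · intro s s'
        show g s s' - (AddMonoidHom.mk' (fun k : H => - t (k : L)) _) (G s s')
            = t (mu s) + t (mu s') - t (mu (s + s'))
        have hχ : (AddMonoidHom.mk' (fun k : H => - t (k : L))
            (fun k k' => by simp only [tadd]; abel)) (G s s') = - t ((G s s' : H) : L) := rfl
        have hb : mu s + mu s' = ((G s s' : H) : L) + mu (s + s') := by rw [hG]; abel
        have h1 : g s s' = t (mu s) + t (mu s') - t (mu s + mu s') := by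
          have h2 := htg' (mu s) (mu s')
          rwa [hmu, hmu] at h2
        rw [h1, hb, htH, hχ]
        abel
    · rintro ⟨χ, T, hT0, hTf, hTg⟩
      have hTf' : ∀ s s' : L ⧸ H, f s s' - χ (F s s') = - T ⁅s, s'⁆ := hTf
      have hTg' : ∀ s s' : L ⧸ H, g s s' - χ (G s s') = T s + T s' - T (s + s') := hTg
      refine ⟨fun x => - χ (δ x) + T (LieSubmodule.Quotient.mk (N := H) x), ?_, ?_, ?_⟩
      · show - χ (δ 0) + T (LieSubmodule.Quotient.mk (N := H) (0 : L)) = 0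
        have hδ0 : δ 0 = 0 := by
          apply Subtype.ext
          rw [δ_coe, hmk0, hmu0, sub_zero]; rfl
        rw [hδ0, map_zero, neg_zero, hmk0, hT0, add_zero]
      · intro x y
        show f (LieSubmodule.Quotient.mk (N := H) x) (LieSubmodule.Quotient.mk (N := H) y)
            = - (- χ (δ ⁅x, y⁆) + T (LieSubmodule.Quotient.mk (N := H) ⁅x, y⁆))
        rw [δ_lie, hmk_lie]
        have h2 := sub_eq_iff_eq_add.mp (hTf' (LieSubmodule.Quotient.mk (N := H) x)
          (LieSubmodule.Quotient.mk (N := H) y))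
        rw [h2]
        abel
      · intro x y
        show g (LieSubmodule.Quotient.mk (N := H) x) (LieSubmodule.Quotient.mk (N := H) y)
            = (- χ (δ x) + T (LieSubmodule.Quotient.mk (N := H) x))
              + (- χ (δ y) + T (LieSubmodule.Quotient.mk (N := H) y))
              - (- χ (δ (x + y)) + T (LieSubmodule.Quotient.mk (N := H) (x + y)))
        rw [δ_add, hmk_add, map_add, map_add]
        have h2 := sub_eq_iff_eq_add.mp (hTg' (LieSubmodule.Quotient.mk (N := H) x)
          (LieSubmodule.Quotient.mk (N := H) y))
        rw [h2]
        abel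
end

section
/- Exactness at Hom(H,A): for a central ideal H of a Lie ring L and abelian group A, a homomorphism χ : H → A lies in the kernel of the transgression map Tra : Hom(H,A) → H²(L/H,A) if and only if χ extends to a Lie ring homomorphism L → A. -/
/-- Exactness at `Hom(H, A)`: for a central ideal `H` of a Lie
ring `L` and an abelian group `A`, a homomorphism `χ : H → A` lies in the
kernel of the transgression map `Tra : Hom(H, A) → H²(L/H, A)` (i.e. its
transgression cocycle `(χ ∘ f, χ ∘ g)` is a coboundary) if and only if `χ`
extends to a Lie ring homomorphism `L → A`. -/
theorem transgression_kernel {L A : Type*} [LieRing L] [AddCommGroup A]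
    (H : LieIdeal ℤ L) (hH : H ≤ LieAlgebra.center ℤ L)
    (mu : (L ⧸ H) → L)
    (hmu : ∀ q : L ⧸ H, (LieSubmodule.Quotient.mk (N := H) (mu q)) = q)
    (hmu0 : mu 0 = 0)
    (F G : (L ⧸ H) → (L ⧸ H) → H)
    (hF : ∀ s t : L ⧸ H, (F s t : L) = ⁅mu s, mu t⁆ - mu ⁅s, t⁆)
    (hG : ∀ s t : L ⧸ H, (G s t : L) = mu s + mu t - mu (s + t))
    (χ : H →+ A) :
    IsLieRingCoboundary (fun s t : L ⧸ H => χ (F s t))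
        (fun s t : L ⧸ H => χ (G s t)) ↔
      ∃ h : L →+ A, (∀ x y : L, h ⁅x, y⁆ = 0) ∧ ∀ k : H, h k = χ k := by
  let π : L → L ⧸ H := fun x => LieSubmodule.Quotient.mk (N := H) x
  have hπmu : ∀ q : L ⧸ H, π (mu q) = q := hmu
  have hπadd : ∀ x y : L, π (x + y) = π x + π y := fun x y =>
    Submodule.Quotient.mk_add H.toSubmodule
  have hπsub : ∀ x y : L, π (x - y) = π x - π y := fun x y =>
    Submodule.Quotient.mk_sub H.toSubmodule
  have hπbr : ∀ x y : L, π ⁅x, y⁆ = ⁅π x, π y⁆ := fun x y =>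
    LieSubmodule.Quotient.mk_bracket (I := H) x y
  have hcentral : ∀ c ∈ H, ∀ y : L, ⁅c, y⁆ = 0 := by
    intro c hc y
    have := (hH hc) y
    rw [← lie_skew, this, neg_zero]
  have hmem : ∀ x : L, x - mu (π x) ∈ H := by
    intro x
    have h0 : π (x - mu (π x)) = 0 := by rw [hπsub, hπmu, sub_self]
    exact LieSubmodule.Quotient.mk_eq_zero'.mp h0
  have hbr : ∀ x y : L, ⁅x, y⁆ = ⁅mu (π x), mu (π y)⁆ := by
    intro x y
    have hx : x = mu (π x) + (x - mu (π x)) := by abel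
    have hy : y = mu (π y) + (y - mu (π y)) := by abel
    conv_lhs => rw [hx, hy]
    rw [add_lie, lie_add, lie_add, hcentral _ (hmem x) _, hcentral _ (hmem x) _,
      ← lie_skew (mu (π x)) (y - mu (π y)), hcentral _ (hmem y) _]
    abel
  constructor
  · rintro ⟨t, ht0, htf, htg⟩
    have htf' : ∀ s u : L ⧸ H, χ (F s u) = - t ⁅s, u⁆ := htf
    have htg' : ∀ s u : L ⧸ H, χ (G s u) = t s + t u - t (s + u) := htg
    refine ⟨AddMonoidHom.mk' (fun x => χ ⟨x - mu (π x), hmem x⟩ + t (π x)) ?_, ?_, ?_⟩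
    · intro x y
      show χ ⟨x + y - mu (π (x + y)), hmem (x + y)⟩ + t (π (x + y)) =
        (χ ⟨x - mu (π x), hmem x⟩ + t (π x)) + (χ ⟨y - mu (π y), hmem y⟩ + t (π y))
      have h1 : (⟨x + y - mu (π (x + y)), hmem (x + y)⟩ : H) =
          ⟨x - mu (π x), hmem x⟩ + ⟨y - mu (π y), hmem y⟩ + G (π x) (π y) := by
        apply Subtype.ext
        show x + y - mu (π (x + y)) =
            (x - mu (π x)) + (y - mu (π y)) + ((G (π x) (π y) : H) : L)
        rw [hG, hπadd]
        abel
      rw [h1, map_add, map_add, htg' (π x) (π y), hπadd]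
      abel
    · intro x y
      show χ ⟨⁅x, y⁆ - mu (π ⁅x, y⁆), hmem ⁅x, y⁆⟩ + t (π ⁅x, y⁆) = 0
      have h1 : (⟨⁅x, y⁆ - mu (π ⁅x, y⁆), hmem ⁅x, y⁆⟩ : H) = F (π x) (π y) := by
        apply Subtype.ext
        show ⁅x, y⁆ - mu (π ⁅x, y⁆) = ((F (π x) (π y) : H) : L)
        rw [hF, hπbr x y, hbr x y]
      rw [h1, htf' (π x) (π y), hπbr]
      abel
    · intro k
      show χ ⟨(k : L) - mu (π (k : L)), hmem (k : L)⟩ + t (π (k : L)) = χ k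
      have hk0 : π (k : L) = 0 := LieSubmodule.Quotient.mk_eq_zero'.mpr k.2
      have h1 : (⟨(k : L) - mu (π (k : L)), hmem (k : L)⟩ : H) = k := by
        apply Subtype.ext
        show (k : L) - mu (π (k : L)) = (k : L)
        rw [hk0, hmu0, sub_zero]
      rw [h1, hk0, ht0, add_zero]
  · rintro ⟨h, hbr0, hext⟩
    refine ⟨fun q => h (mu q), by simp only []; rw [hmu0, map_zero], ?_, ?_⟩
    · intro s u
      show χ (F s u) = - h (mu ⁅s, u⁆)
      rw [← hext (F s u), hF, map_sub, hbr0, zero_sub]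
    · intro s u
      show χ (G s u) = h (mu s) + h (mu u) - h (mu (s + u))
      rw [← hext (G s u), hG, map_sub, map_add]
end

section
/- Let K be a central ideal of a Lie ring L such that L² ∩ K is finite. Then L² ∩ K is isomorphic (as abelian group) to the image of the transgression map Tra : Hom(K,ℂ*) → H²(L/K,ℂ*). In particular L² ∩ K embeds into H²(L/K,ℂ*), and if Tra is surjective then L² ∩ K ≅ H²(L/K,ℂ*). -/
def lieZ2 (L A : Type*) [LieRing L] [AddCommGroup A] :
    AddSubgroup ((L → L → A) × (L → L → A)) where
  carrier := {p | IsLieRingCocycle p.1 p.2}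
  zero_mem' := by
    refine ⟨?_, ?_, ?_, ?_, ?_, ?_⟩ <;> intros <;> simp
  add_mem' := by
    intro p q hp hq
    obtain ⟨h1, h2, h3, h4, h5, h6⟩ := hp
    obtain ⟨h1', h2', h3', h4', h5', h6'⟩ := hq
    refine ⟨fun x y z => ?_, fun x y z => ?_, fun x => ?_, fun x y z => ?_,
      fun x y z => ?_, fun x y => ?_⟩ <;>
      simp only [Prod.fst_add, Prod.snd_add, Pi.add_apply]
    · rw [h1, h1']; abel
    · rw [h2, h2']; abel
    · rw [h3, h3']; abel
    · calc p.1 x ⁅y, z⁆ + q.1 x ⁅y, z⁆ + (p.1 z ⁅x, y⁆ + q.1 z ⁅x, y⁆) +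
            (p.1 y ⁅z, x⁆ + q.1 y ⁅z, x⁆)
          = (p.1 x ⁅y, z⁆ + p.1 z ⁅x, y⁆ + p.1 y ⁅z, x⁆) +
            (q.1 x ⁅y, z⁆ + q.1 z ⁅x, y⁆ + q.1 y ⁅z, x⁆) := by abel
        _ = (- p.2 ⁅x, ⁅y, z⁆⁆ ⁅z, ⁅x, y⁆⁆ - p.2 (-⁅y, ⁅z, x⁆⁆) ⁅y, ⁅z, x⁆⁆) +
            (- q.2 ⁅x, ⁅y, z⁆⁆ ⁅z, ⁅x, y⁆⁆ - q.2 (-⁅y, ⁅z, x⁆⁆) ⁅y, ⁅z, x⁆⁆) := by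
              rw [h4, h4']
        _ = _ := by abel
    · calc p.2 (x + y) z + q.2 (x + y) z + (p.2 x y + q.2 x y)
          = (p.2 (x + y) z + p.2 x y) + (q.2 (x + y) z + q.2 x y) := by abel
        _ = (p.2 x (y + z) + p.2 y z) + (q.2 x (y + z) + q.2 y z) := by rw [h5, h5']
        _ = _ := by abel
    · rw [h6, h6']
  neg_mem' := by
    intro p hp
    obtain ⟨h1, h2, h3, h4, h5, h6⟩ := hp
    refine ⟨fun x y z => ?_, fun x y z => ?_, fun x => ?_, fun x y z => ?_,
      fun x y z => ?_, fun x y => ?_⟩ <;>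
      simp only [Prod.fst_neg, Prod.snd_neg, Pi.neg_apply]
    · rw [h1]; abel
    · rw [h2]; abel
    · rw [h3]; abel
    · rw [← neg_add, ← neg_add, h4]; abel
    · rw [← neg_add, ← neg_add, h5]
    · rw [h6]

def lieB2 (L A : Type*) [LieRing L] [AddCommGroup A] :
    AddSubgroup (lieZ2 L A) where
  carrier := {p | IsLieRingCoboundary p.val.1 p.val.2}
  zero_mem' := ⟨0, by simp, by simp, by simp⟩
  add_mem' := by
    rintro p q ⟨t, ht0, htf, htg⟩ ⟨s, hs0, hsf, hsg⟩
    refine ⟨t + s, by simp [ht0, hs0], fun x y => ?_, fun x y => ?_⟩ <;>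
      simp only [AddSubgroup.coe_add, Prod.fst_add, Prod.snd_add, Pi.add_apply,
        htf, hsf, htg, hsg] <;> abel
  neg_mem' := by
    rintro p ⟨t, ht0, htf, htg⟩
    refine ⟨-t, by simp [ht0], fun x y => ?_, fun x y => ?_⟩ <;>
      simp only [AddSubgroup.coe_neg, Prod.fst_neg, Prod.snd_neg, Pi.neg_apply,
        htf, htg] <;> abel

/-- Second Lie ring cohomology of `L` with coefficients in the trivial module `A`. -/
def lieH2 (L A : Type*) [LieRing L] [AddCommGroup A] :=
  lieZ2 L A ⧸ lieB2 L A

instance (L A : Type*) [LieRing L] [AddCommGroup A] : AddCommGroup (lieH2 L A) :=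
  QuotientAddGroup.Quotient.addCommGroup _

noncomputable instance : DivisibleBy (Additive ℂˣ) ℤ :=
  divisibleByOfSMulRightSurj _ _ fun {n} hn x => by
    have hn' : (n : ℂ) ≠ 0 := Int.cast_ne_zero.2 hn
    refine ⟨.ofMul (Units.mk0 (Complex.exp (Complex.log x.toMul / n)) (Complex.exp_ne_zero _)), ?_⟩
    apply Additive.toMul.injective
    ext
    simp [← ofMul_zpow, Units.val_zpow_eq_zpow_val, ← Complex.exp_int_mul, mul_div_cancel₀ _ hn',
      Complex.exp_log x.toMul.ne_zero]

theorem AddMonoidHom.exists_comp_eq_of_ker_le {X Y A : Type*} [AddCommGroup X] [AddCommGroup Y]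
    [AddCommGroup A] [DivisibleBy A ℤ] (f : X →+ Y) (g : X →+ A) (h : f.ker ≤ g.ker) :
    ∃ ν : Y →+ A, ν.comp f = g := by
  obtain ⟨ν, hν⟩ := (Module.Baer.of_divisible A).extension_property_addMonoidHom
    (QuotientAddGroup.kerLift f) (QuotientAddGroup.kerLift_injective f)
    (QuotientAddGroup.lift f.ker g h)
  exact ⟨ν, AddMonoidHom.ext fun x => DFunLike.congr_fun hν (x : X ⧸ f.ker)⟩

theorem AddMonoidHom.compHom'_surjective {X Y A : Type*} [AddCommGroup X] [AddCommGroup Y]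
    [AddCommGroup A] [DivisibleBy A ℤ] {f : X →+ Y} (hf : Function.Injective f) :
    Function.Surjective (compHom' f : (Y →+ A) →+ (X →+ A)) :=
  (Module.Baer.of_divisible A).extension_property_addMonoidHom f hf

theorem AddCommGroup.nonempty_addMonoidHom_units_complex_addEquiv (D : Type*) [AddCommGroup D]
    [Finite D] : Nonempty ((D →+ Additive ℂˣ) ≃+ D) := by
  have : NeZero (Monoid.exponent (Multiplicative D) : ℂ) :=
    ⟨Nat.cast_ne_zero.2
      (Monoid.ExponentExists.of_finite (G := Multiplicative D)).exponent_pos.ne'⟩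
  obtain ⟨e⟩ := CommGroup.monoidHom_mulEquiv_of_hasEnoughRootsOfUnity (Multiplicative D) ℂ
  exact ⟨AddEquiv.mk'
    (AddMonoidHom.toMultiplicativeLeft.trans (e.toEquiv.trans Multiplicative.toAdd))
    fun χ ψ => map_mul e (AddMonoidHom.toMultiplicativeLeft χ)
      (AddMonoidHom.toMultiplicativeLeft ψ)⟩

noncomputable def AddMonoidHom.rangeEquivOfKerEq {G H H' : Type*} [AddGroup G] [AddGroup H]
    [AddGroup H'] (f : G →+ H) (g : G →+ H') (hg : Function.Surjective g) (h : f.ker = g.ker) :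
    f.range ≃+ H' :=
  (QuotientAddGroup.quotientKerEquivRange f).symm.trans
    ((QuotientAddGroup.quotientAddEquivOfEq h).trans
      (QuotientAddGroup.quotientKerEquivOfSurjective g hg))

theorem IsLieRingCocycle.map {L A B : Type*} [LieRing L] [AddCommGroup A] [AddCommGroup B]
    {f g : L → L → A} (h : IsLieRingCocycle f g) (χ : A →+ B) :
    IsLieRingCocycle (fun x y => χ (f x y)) (fun x y => χ (g x y)) := by
  obtain ⟨h₁, h₂, h₃, h₄, h₅, h₆⟩ := h
  refine ⟨fun x y z => ?_, fun x y z => ?_, fun x => ?_, fun x y z => ?_, fun x y z => ?_,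
    fun x y => ?_⟩
  · simp only [h₁, map_add]
  · simp only [h₂, map_add]
  · simp only [h₃, map_zero]
  · rw [← map_add, ← map_add, h₄, map_sub, map_neg]
  · rw [← map_add, ← map_add, h₅]
  · exact congrArg χ (h₆ x y)

section CentralExtension

variable {L : Type*} [LieRing L] {K : LieIdeal ℤ L} {mu : L ⧸ K → L}
  {F G : L ⧸ K → L ⧸ K → K} {A : Type*} [AddCommGroup A] {χ : K →+ A}

theorem AddMonoidHom.map_eq_zero_of_mem_derived (ν : L →+ A) (hν : ∀ a b : L, ν ⁅a, b⁆ = 0)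
    {x : L} (hx : x ∈ ⁅(⊤ : LieIdeal ℤ L), (⊤ : LieIdeal ℤ L)⁆) : ν x = 0 := by
  have : LieSubmodule.toSubmodule ⁅(⊤ : LieIdeal ℤ L), (⊤ : LieIdeal ℤ L)⁆ ≤
      LinearMap.ker ν.toIntLinearMap := by
    rw [LieSubmodule.lieIdeal_oper_eq_linear_span', Submodule.span_le]
    rintro _ ⟨a, -, b, -, rfl⟩
    exact hν a b
  exact this hx

theorem lie_eq_lie_of_mk_eq (hK : K ≤ LieAlgebra.center ℤ L) {a a' b b' : L}
    (ha : LieSubmodule.Quotient.mk (N := K) a = LieSubmodule.Quotient.mk a')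
    (hb : LieSubmodule.Quotient.mk (N := K) b = LieSubmodule.Quotient.mk b') :
    ⁅a, b⁆ = ⁅a', b'⁆ := by
  have hcentral : ∀ {k}, k ∈ K → ∀ y : L, ⁅y, k⁆ = 0 := fun hk =>
    (LieModule.mem_maxTrivSubmodule ℤ L L _).1 (hK hk)
  have ha' : a - a' ∈ K := (Submodule.Quotient.eq _).1 ha
  have hb' : b - b' ∈ K := (Submodule.Quotient.eq _).1 hb
  rw [← sub_eq_zero, show ⁅a, b⁆ - ⁅a', b'⁆ = -⁅b, a - a'⁆ + ⁅a', b - b'⁆ by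
    rw [lie_sub, lie_sub, ← lie_skew b a, ← lie_skew b a']; abel, hcentral ha', hcentral hb']
  simp

theorem sub_mu_mk_mem (hmu : ∀ q : L ⧸ K, LieSubmodule.Quotient.mk (N := K) (mu q) = q)
    (x : L) : x - mu (LieSubmodule.Quotient.mk x) ∈ K :=
  (Submodule.Quotient.eq _).1 (hmu _).symm

theorem isLieRingCocycle_of_section (hK : K ≤ LieAlgebra.center ℤ L)
    (hmu : ∀ q : L ⧸ K, LieSubmodule.Quotient.mk (N := K) (mu q) = q) (hmu0 : mu 0 = 0)
    (hF : ∀ s t : L ⧸ K, (F s t : L) = ⁅mu s, mu t⁆ - mu ⁅s, t⁆)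
    (hG : ∀ s t : L ⧸ K, (G s t : L) = mu s + mu t - mu (s + t)) :
    IsLieRingCocycle F G := by
  have lie_mu : ∀ {a b : L ⧸ K} {x y : L}, LieSubmodule.Quotient.mk x = a →
      LieSubmodule.Quotient.mk y = b → ⁅mu a, mu b⁆ = ⁅x, y⁆ := fun ha hb =>
    lie_eq_lie_of_mk_eq hK (by rw [hmu, ha]) (by rw [hmu, hb])
  refine ⟨fun x y z => ?_, fun x y z => ?_, fun x => ?_, fun x y z => ?_, fun x y z => ?_,
    fun x y => ?_⟩ <;> apply Subtype.ext <;> push_cast [hF, hG]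
  · rw [lie_mu (x := mu x + mu y) (y := mu z) (by simp [hmu]) (hmu z), add_lie (mu x), add_lie x]
    abel
  · rw [lie_mu (x := mu x) (y := mu y + mu z) (hmu x) (by simp [hmu]), lie_add (mu x), lie_add x]
    abel
  · rw [lie_self, lie_self, hmu0, sub_zero]
  · have hjac : ⁅x, ⁅y, z⁆⁆ + ⁅z, ⁅x, y⁆⁆ = -⁅y, ⁅z, x⁆⁆ := by
      rw [eq_neg_iff_add_eq_zero, ← lie_jacobi x y z]; abel
    have hjac_mu := lie_jacobi (mu x) (mu y) (mu z)
    rw [lie_mu (b := ⁅y, z⁆) (hmu x) (y := ⁅mu y, mu z⁆) (by simp [hmu]),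
      lie_mu (b := ⁅x, y⁆) (hmu z) (y := ⁅mu x, mu y⁆) (by simp [hmu]),
      lie_mu (b := ⁅z, x⁆) (hmu y) (y := ⁅mu z, mu x⁆) (by simp [hmu]), hjac, neg_add_cancel,
      hmu0]
    linear_combination (norm := abel) hjac_mu
  · rw [add_assoc]
    abel
  · rw [add_comm x y]
    abel

theorem map_eq_zero_of_isLieRingCoboundary (hK : K ≤ LieAlgebra.center ℤ L)
    (hmu : ∀ q : L ⧸ K, LieSubmodule.Quotient.mk (N := K) (mu q) = q) (hmu0 : mu 0 = 0)
    (hF : ∀ s t : L ⧸ K, (F s t : L) = ⁅mu s, mu t⁆ - mu ⁅s, t⁆)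
    (hG : ∀ s t : L ⧸ K, (G s t : L) = mu s + mu t - mu (s + t))
    (hχ : IsLieRingCoboundary (fun s t => χ (F s t)) (fun s t => χ (G s t)))
    (k : K) (hk : (k : L) ∈ ⁅(⊤ : LieIdeal ℤ L), (⊤ : LieIdeal ℤ L)⁆) : χ k = 0 := by
  obtain ⟨t, ht0, htF, htG⟩ := hχ
  let π : L → L ⧸ K := LieSubmodule.Quotient.mk
  let ρ (x : L) : K := ⟨x - mu (π x), sub_mu_mk_mem hmu x⟩
  have hρ_add (x y : L) : ρ (x + y) = ρ x + ρ y + G (π x) (π y) := by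
    apply Subtype.ext
    push_cast [ρ, hG]
    rw [show π (x + y) = π x + π y from rfl]
    abel
  have hρ_lie (x y : L) : ρ ⁅x, y⁆ = F (π x) (π y) := by
    apply Subtype.ext
    rw [hF, ← lie_eq_lie_of_mk_eq hK (hmu (π x)).symm (hmu (π y)).symm]
    rfl
  let ν : L →+ A := AddMonoidHom.mk' (fun x => t (π x) + χ (ρ x)) fun x y => by
    simp only [hρ_add, map_add, htG]
    rw [show π (x + y) = π x + π y from rfl]
    abel
  have hν_lie (x y : L) : ν ⁅x, y⁆ = 0 := by
    simp only [ν, AddMonoidHom.mk'_apply, hρ_lie, htF]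
    rw [show π ⁅x, y⁆ = ⁅π x, π y⁆ from LieSubmodule.Quotient.mk_bracket (I := K) x y]
    abel
  have hπk : π k = 0 := (LieSubmodule.Quotient.mk_eq_zero' (N := K)).2 k.2
  have hρk : ρ k = k := Subtype.ext (by simp [ρ, hπk, hmu0])
  simpa [ν, hπk, hρk, ht0] using ν.map_eq_zero_of_mem_derived hν_lie hk

theorem isLieRingCoboundary_of_map_eq_zero [DivisibleBy A ℤ] (hmu0 : mu 0 = 0)
    (hF : ∀ s t : L ⧸ K, (F s t : L) = ⁅mu s, mu t⁆ - mu ⁅s, t⁆)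
    (hG : ∀ s t : L ⧸ K, (G s t : L) = mu s + mu t - mu (s + t))
    (hχ : ∀ k : K, (k : L) ∈ ⁅(⊤ : LieIdeal ℤ L), (⊤ : LieIdeal ℤ L)⁆ → χ k = 0) :
    IsLieRingCoboundary (fun s t => χ (F s t)) (fun s t => χ (G s t)) := by
  let D : AddSubgroup L :=
    (LieSubmodule.toSubmodule ⁅(⊤ : LieIdeal ℤ L), (⊤ : LieIdeal ℤ L)⁆).toAddSubgroup
  obtain ⟨ν, hν⟩ := AddMonoidHom.exists_comp_eq_of_ker_le
    ((QuotientAddGroup.mk' D).comp (LieSubmodule.toSubmodule K).subtype.toAddMonoidHom) χ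
    fun k hk => hχ k ((QuotientAddGroup.eq_zero_iff _).1 hk)
  have hνχ (k : K) : χ k = ν (k : L) := (DFunLike.congr_fun hν k).symm
  refine ⟨fun q => ν (mu q), by simp [hmu0], fun s s' => ?_, fun s s' => ?_⟩
  · have hlie : (QuotientAddGroup.mk ⁅mu s, mu s'⁆ : L ⧸ D) = 0 :=
      (QuotientAddGroup.eq_zero_iff _).2
        (LieSubmodule.lie_mem_lie (LieSubmodule.mem_top (mu s)) (LieSubmodule.mem_top (mu s')))
    simp [hνχ, hF, hlie]
  · simp [hνχ, hG]

end CentralExtension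

/-- Let `K` be a central ideal of a Lie ring `L` with `L² ∩ K`
finite. Then `L² ∩ K` is isomorphic, as an abelian group, to the image of the
transgression map `Tra : Hom(K, ℂ*) → H²(L/K, ℂ*)` associated to the central
extension `0 → K → L → L/K → 0` (via a section `μ` with `μ 0 = 0` and
associated cocycle `(F, G)`). In particular `L² ∩ K` embeds into
`H²(L/K, ℂ*)`, and if `Tra` is surjective then `L² ∩ K ≅ H²(L/K, ℂ*)`.
Here `ℂ*` is the multiplicative group of nonzero complex numbers, regarded as
the (additively written) trivial coefficient module `Additive ℂˣ`. -/
theorem derived_inter_central_iso_transgression_image {L : Type*} [LieRing L]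
    (K : LieIdeal ℤ L) (hK : K ≤ LieAlgebra.center ℤ L)
    (hfin : Finite ↥(⁅(⊤ : LieIdeal ℤ L), (⊤ : LieIdeal ℤ L)⁆ ⊓ K : LieIdeal ℤ L))
    (mu : (L ⧸ K) → L)
    (hmu : ∀ q : L ⧸ K, (LieSubmodule.Quotient.mk (N := K) (mu q)) = q)
    (hmu0 : mu 0 = 0)
    (F G : (L ⧸ K) → (L ⧸ K) → K)
    (hF : ∀ s t : L ⧸ K, (F s t : L) = ⁅mu s, mu t⁆ - mu ⁅s, t⁆)
    (hG : ∀ s t : L ⧸ K, (G s t : L) = mu s + mu t - mu (s + t))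
    (Tra : (K →+ Additive ℂˣ) →+ lieH2 (L ⧸ K) (Additive ℂˣ))
    (hTra : ∀ (χ : K →+ Additive ℂˣ) (p : lieZ2 (L ⧸ K) (Additive ℂˣ)),
      p.val.1 = (fun s t => χ (F s t)) →
      p.val.2 = (fun s t => χ (G s t)) →
      Tra χ = QuotientAddGroup.mk p) :
    Nonempty
      ((↥(⁅(⊤ : LieIdeal ℤ L), (⊤ : LieIdeal ℤ L)⁆ ⊓ K : LieIdeal ℤ L)) ≃+
        Tra.range) ∧
    (Function.Surjective Tra →
      Nonempty
        ((↥(⁅(⊤ : LieIdeal ℤ L), (⊤ : LieIdeal ℤ L)⁆ ⊓ K : LieIdeal ℤ L)) ≃+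
          lieH2 (L ⧸ K) (Additive ℂˣ))) := by
  have hTra_apply (χ : K →+ Additive ℂˣ) : Tra χ = QuotientAddGroup.mk
      ⟨(fun s t => χ (F s t), fun s t => χ (G s t)),
        (isLieRingCocycle_of_section hK hmu hmu0 hF hG).map χ⟩ := hTra χ _ rfl rfl
  let ι := (LieSubmodule.inclusion (inf_le_right :
    ⁅(⊤ : LieIdeal ℤ L), (⊤ : LieIdeal ℤ L)⁆ ⊓ K ≤ K)).toLinearMap.toAddMonoidHom
  have hker : Tra.ker = (AddMonoidHom.compHom' ι (P := Additive ℂˣ)).ker := by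
    ext χ
    rw [AddMonoidHom.mem_ker, AddMonoidHom.mem_ker, hTra_apply]
    refine (QuotientAddGroup.eq_zero_iff (N := lieB2 (L ⧸ K) (Additive ℂˣ)) _).trans ⟨?_, ?_⟩
    · exact fun hχ => AddMonoidHom.ext fun d => map_eq_zero_of_isLieRingCoboundary
        hK hmu hmu0 hF hG hχ (ι d) ((LieSubmodule.mem_inf _ _ _).1 d.2).1
    · exact fun hχ => isLieRingCoboundary_of_map_eq_zero hmu0 hF hG fun k hk =>
        DFunLike.congr_fun hχ ⟨k, (LieSubmodule.mem_inf _ _ _).2 ⟨hk, k.2⟩⟩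
  obtain ⟨dual⟩ := AddCommGroup.nonempty_addMonoidHom_units_complex_addEquiv
    ↥(⁅(⊤ : LieIdeal ℤ L), (⊤ : LieIdeal ℤ L)⁆ ⊓ K : LieIdeal ℤ L)
  have hι : Function.Injective ι := LieSubmodule.inclusion_injective inf_le_right
  let e := (Tra.rangeEquivOfKerEq _ (AddMonoidHom.compHom'_surjective hι) hker).trans dual
  refine ⟨⟨e.symm⟩, fun hTra_surj => ⟨e.symm.trans ?_⟩⟩
  exact (AddEquiv.addSubgroupCongr (Tra.range_eq_top_of_surjective hTra_surj)).trans
    AddSubgroup.topEquiv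
end
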